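/- arXiv:2003.08456 — 4 statements merged into one kernel-verified Lean document; each statement's English description precedes it below -/
import Mathlib

section
/- For three points p, q, r on the unit sphere S² in ℝ³, define sgn(p,q,r) as the sign of the determinant of the 3×3 matrix with columns p, q, r. If f : S → S' is an orientation preserving bijection between finite subsets of S² (i.e. sgn(f(p),f(q),f(r)) = sgn(p,q,r) for all triples), S is not contained in any great circle, and {p, -p} ⊆ S is an antipodal pair, then f(-p) = -f(p). -/
open scoped RealInnerProductSpace

noncomputable section

abbrev E3 := EuclideanSpace ℝ (Fin 3)

/-- Determinant of the 3×3 matrix whose rows are `p`, `q`, `r`. -/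
def det3 (p q r : E3) : ℝ := Matrix.det (Matrix.of ![fun i => p i, fun i => q i, fun i => r i])

/-- The orientation `sgn(p,q,r)` of a triple of points: the sign of `det3 p q r`. -/
def sgn3 (p q r : E3) : ℝ := Real.sign (det3 p q r)

/-! Since `det(p, -p, x) = 0` for every `x`, orientation preservation makes the cross product
`f p × f (-p)` orthogonal to all of `f '' S`. As `S` lies on no great circle, it contains a
triple `p, r, s` of nonzero determinant; its image then also has nonzero determinant and spans
`ℝ³`, so the cross product vanishes. Two unit vectors with vanishing cross product are equal
or opposite, and injectivity of `f` rules out `f (-p) = f p`. -/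

open Matrix WithLp

def cross (p q : E3) : E3 := toLp 2 (ofLp p ⨯₃ ofLp q)

lemma inner_eq_dotProduct (v w : E3) : ⟪v, w⟫ = ofLp w ⬝ᵥ ofLp v := by
  simp [EuclideanSpace.inner_eq_star_dotProduct]

lemma det3_eq_inner_cross (p q r : E3) : det3 p q r = ⟪cross p q, r⟫ := by
  rw [inner_eq_dotProduct, cross, triple_product_permutation, triple_product_eq_det]
  rfl

lemma det3_swap_right (p q r : E3) : det3 p r q = -det3 p q r := by
  simp only [det3, det_fin_three, of_apply, cons_val_zero, cons_val_one, cons_val_two, head_cons,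
    tail_cons]
  ring

lemma det3_neg_self (p r : E3) : det3 p (-p) r = 0 := by
  simp [det3_eq_inner_cross, cross]

lemma det3_eq_zero_iff_of_sgn3_eq {a b c p q r : E3} (h : sgn3 a b c = sgn3 p q r) :
    det3 a b c = 0 ↔ det3 p q r = 0 := by
  unfold sgn3 at h
  rw [← Real.sign_eq_zero_iff, h, Real.sign_eq_zero_iff]

lemma exists_cross_ne_zero {q : E3} (hq : q ≠ 0) : ∃ u, cross q u ≠ 0 := by
  obtain ⟨u, hu⟩ := exists_linearIndependent_pair_of_one_lt_finrank (R := ℝ) (M := Fin 3 → ℝ)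
    (by simp) (x := ofLp q) (by simpa using hq)
  exact ⟨toLp 2 u, fun h => crossProduct_ne_zero_iff_linearIndependent.mpr hu (congrArg ofLp h)⟩

lemma exists_det3_ne_zero {S : Set E3} (hS : ¬ ∃ v : E3, v ≠ 0 ∧ ∀ p ∈ S, ⟪v, p⟫ = (0 : ℝ))
    {q : E3} (hq : q ≠ 0) : ∃ r ∈ S, ∃ s ∈ S, det3 q r s ≠ 0 := by
  obtain ⟨u, hu⟩ := exists_cross_ne_zero hq
  by_contra! h
  -- Otherwise every `q × r` with `r ∈ S` is normal to `S`, hence zero; then so is `q × u`.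
  refine hS ⟨cross q u, hu, fun r hr => ?_⟩
  have hqr : cross q r = 0 := by
    by_contra hne
    exact hS ⟨cross q r, hne, fun s hs => by rw [← det3_eq_inner_cross]; exact h r hr s hs⟩
  rw [← det3_eq_inner_cross, det3_swap_right, det3_eq_inner_cross, hqr, inner_zero_left, neg_zero]

lemma eq_zero_of_inner_eq_zero_of_det3_ne_zero {q r s w : E3} (h : det3 q r s ≠ 0)
    (hq : ⟪w, q⟫ = 0) (hr : ⟪w, r⟫ = 0) (hs : ⟪w, s⟫ = 0) : w = 0 := by
  by_contra hw
  refine h (exists_mulVec_eq_zero_iff.mp ⟨ofLp w, fun h0 => hw (ofLp_injective 2 h0), ?_⟩)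
  rw [inner_eq_dotProduct] at hq hr hs
  ext i; fin_cases i
  · simpa [mulVec, dotProduct_comm] using hq
  · simpa [mulVec, dotProduct_comm] using hr
  · simpa [mulVec, dotProduct_comm] using hs

lemma eq_or_eq_neg_of_cross_eq_zero {a b : E3} (ha : ‖a‖ = 1) (hb : ‖b‖ = 1)
    (h : cross a b = 0) : b = a ∨ b = -a := by
  have haa : ofLp a ⬝ᵥ ofLp a = 1 := by
    rw [← inner_eq_dotProduct, real_inner_self_eq_norm_sq, ha, one_pow]
  have hba : b = ⟪a, b⟫ • a := by
    have hab : ofLp a ⨯₃ ofLp b = 0 := congrArg ofLp h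
    have := cross_cross_eq_smul_sub_smul' (ofLp a) (ofLp a) (ofLp b)
    rw [hab, map_zero, haa, one_smul, eq_comm, sub_eq_zero] at this
    apply ofLp_injective 2
    rw [ofLp_smul, inner_eq_dotProduct, dotProduct_comm]
    exact this.symm
  have ht : |⟪a, b⟫| = 1 := by
    simpa [ha, hb, norm_smul] using (congrArg norm hba).symm
  rcases abs_eq (zero_le_one' ℝ) |>.mp ht with ht | ht
  · left; rw [hba, ht, one_smul]
  · right; rw [hba, ht, neg_one_smul]

theorem stmt0_general (S S' : Set E3)
    (hSsph : S ⊆ Metric.sphere (0 : E3) 1) (hS'sph : S' ⊆ Metric.sphere (0 : E3) 1)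
    (f : E3 → E3) (hbij : Set.BijOn f S S')
    (hpres : ∀ p ∈ S, ∀ q ∈ S, ∀ r ∈ S, sgn3 (f p) (f q) (f r) = sgn3 p q r)
    (hngc : ¬ ∃ v : E3, v ≠ 0 ∧ ∀ p ∈ S, ⟪v, p⟫ = (0 : ℝ))
    (p : E3) (hp : p ∈ S) (hnp : -p ∈ S) :
    f (-p) = -(f p) := by
  have hp0 : p ≠ 0 := ne_zero_of_mem_sphere one_ne_zero ⟨p, hSsph hp⟩
  obtain ⟨r, hr, s, hs, hdet⟩ := exists_det3_ne_zero hngc hp0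
  have hflat : ∀ x ∈ S, ⟪cross (f p) (f (-p)), f x⟫ = 0 := fun x hx => by
    rw [← det3_eq_inner_cross, det3_eq_zero_iff_of_sgn3_eq (hpres p hp (-p) hnp x hx)]
    exact det3_neg_self p x
  have hcross : cross (f p) (f (-p)) = 0 :=
    eq_zero_of_inner_eq_zero_of_det3_ne_zero
      (mt (det3_eq_zero_iff_of_sgn3_eq (hpres p hp r hr s hs)).mp hdet)
      (hflat p hp) (hflat r hr) (hflat s hs)
  have hunit : ∀ x ∈ S, ‖f x‖ = 1 := fun x hx =>
    mem_sphere_zero_iff_norm.mp (hS'sph (hbij.mapsTo hx))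
  rcases eq_or_eq_neg_of_cross_eq_zero (hunit p hp) (hunit (-p) hnp) hcross with h | h
  · have hpp : -p = p := hbij.injOn hnp hp h
    rw [neg_eq_iff_add_eq_zero, ← two_smul ℝ] at hpp
    exact absurd (by simpa using hpp) hp0
  · exact h

/-- If `f : S → S'` is an orientation preserving bijection between finite
subsets of the unit sphere, `S` is not contained in a great circle, and `{p, -p} ⊆ S`
is an antipodal pair, then `f (-p) = - f p`. -/
theorem stmt0 (S S' : Set E3) (hSfin : S.Finite) (hS'fin : S'.Finite)
    (hSsph : S ⊆ Metric.sphere (0 : E3) 1) (hS'sph : S' ⊆ Metric.sphere (0 : E3) 1)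
    (f : E3 → E3) (hbij : Set.BijOn f S S')
    (hpres : ∀ p ∈ S, ∀ q ∈ S, ∀ r ∈ S, sgn3 (f p) (f q) (f r) = sgn3 p q r)
    (hngc : ¬ ∃ v : E3, v ≠ 0 ∧ ∀ p ∈ S, ⟪v, p⟫ = (0 : ℝ))
    (p : E3) (hp : p ∈ S) (hnp : -p ∈ S) :
    f (-p) = -(f p) :=
  stmt0_general S S' hSsph hS'sph f hbij hpres hngc p hp hnp
end
end

section
/- Let A be a finite planar point set in general position and let t : ℝ² → ℝ² be a projective transformation whose line sent to infinity is disjoint from A and separates A into two nonempty parts. Then at most 4 points of A are simultaneously extreme (vertices of the convex hull) in A and have extreme images in t(A). -/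
noncomputable section

abbrev E2 := EuclideanSpace ℝ (Fin 2)

/-- Homogeneous coordinates of a planar point. -/
def lift (x : E2) : Fin 3 → ℝ := ![x 0, x 1, 1]

/-!
Let `ℓ` be the affine function whose zero line `t` sends to infinity. We show that at most two
doubly extreme points lie on each side of that line. Suppose `p, q, r` are doubly extreme with
`ℓ > 0` and `b ∈ A` has `ℓ b < 0`. Extremality of `p` in `A` gives an affine function negative
exactly at `p` among `A`. Extremality of `t p` in `t A` gives an affine `g` negative exactly at
`t p` among `t A`; in homogeneous coordinates `x ↦ g (t x) * ℓ x` is again affine, and it is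
negative exactly at `p` and at the points of `A` beyond the line, such as `b`. These six
functions, together with `ℓ`, strictly separate every bipartition of `{p, q, r, b}`, whereas by
Radon's theorem some bipartition of four points in the plane has intersecting convex hulls.
-/

open Set
open scoped Matrix

section Separation

variable {E : Type*}

def IsolatesPoint (f : E → ℝ) (A : Set E) (p : E) : Prop :=
  f p < 0 ∧ ∀ a ∈ A, a ≠ p → 0 < f a

lemma IsolatesPoint.signs_of_mul {f ℓ : E → ℝ} {A : Set E} {p : E}
    (h : IsolatesPoint (fun x => f x * ℓ x) A p) (hp : 0 < ℓ p) :
    f p < 0 ∧ (∀ a ∈ A, a ≠ p → 0 < ℓ a → 0 < f a) ∧ ∀ a ∈ A, ℓ a < 0 → f a < 0 := by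
  refine ⟨(neg_iff_pos_of_mul_neg h.1).2 hp, fun a ha hap hℓa => ?_, fun a ha hℓa => ?_⟩
  · exact (pos_iff_pos_of_mul_pos (h.2 a ha hap)).2 hℓa
  · exact (neg_iff_neg_of_mul_pos (h.2 a ha (by rintro rfl; linarith))).2 hℓa

variable [AddCommGroup E] [Module ℝ E]

def IsDoublyIsolated (A : Set E) (ℓ : E →ᵃ[ℝ] ℝ) (p : E) : Prop :=
  (∃ f : E →ᵃ[ℝ] ℝ, IsolatesPoint f A p) ∧
    ∃ f : E →ᵃ[ℝ] ℝ, IsolatesPoint (fun x => f x * ℓ x) A p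

lemma IsDoublyIsolated.neg {A : Set E} {ℓ : E →ᵃ[ℝ] ℝ} {p : E} (h : IsDoublyIsolated A ℓ p) :
    IsDoublyIsolated A (-ℓ) p := by
  obtain ⟨hf, g, hg⟩ := h
  exact ⟨hf, -g, by simpa only [AffineMap.coe_neg, Pi.neg_apply, neg_mul_neg] using hg⟩

def AffinelySeparates {ι : Type*} (v : ι → E) (I : Set ι) : Prop :=
  ∃ f : E →ᵃ[ℝ] ℝ, ∀ i, (i ∈ I → f (v i) < 0) ∧ (i ∉ I → 0 < f (v i))

lemma AffinelySeparates.compl {ι : Type*} {v : ι → E} {I : Set ι} (h : AffinelySeparates v I) :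
    AffinelySeparates v Iᶜ := by
  obtain ⟨f, hf⟩ := h
  refine ⟨-f, fun i => ?_⟩
  simp only [mem_compl_iff, not_not, AffineMap.coe_neg, Pi.neg_apply, neg_neg_iff_pos,
    Left.neg_pos_iff]
  exact (hf i).symm

lemma affineIndependent_of_forall_affinelySeparates {ι : Type*} {v : ι → E}
    (h : ∀ I, AffinelySeparates v I) : AffineIndependent ℝ v := by
  by_contra hv
  obtain ⟨I, y, hyI, hyIc⟩ := Convex.radon_partition hv
  obtain ⟨f, hf⟩ := h I
  have hneg : f y < 0 := convexHull_min (by rintro _ ⟨i, hi, rfl⟩; exact (hf i).1 hi)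
    ((convex_Iio 0).affine_preimage f) hyI
  have hpos : 0 < f y := convexHull_min (by rintro _ ⟨i, hi, rfl⟩; exact (hf i).2 hi)
    ((convex_Ioi 0).affine_preimage f) hyIc
  exact hneg.not_gt hpos

lemma false_of_three_isDoublyIsolated [FiniteDimensional ℝ E] (hE : Module.finrank ℝ E ≤ 2)
    {A : Set E} {ℓ : E →ᵃ[ℝ] ℝ} {p q r b : E} (hp : p ∈ A) (hq : q ∈ A) (hr : r ∈ A)
    (hb : b ∈ A) (hpq : p ≠ q) (hpr : p ≠ r) (hqr : q ≠ r)
    (hℓp : 0 < ℓ p) (hℓq : 0 < ℓ q) (hℓr : 0 < ℓ r) (hℓb : ℓ b < 0)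
    (hdp : IsDoublyIsolated A ℓ p) (hdq : IsDoublyIsolated A ℓ q)
    (hdr : IsDoublyIsolated A ℓ r) : False := by
  obtain ⟨⟨gp, gpp, hgp⟩, fp, hfp⟩ := hdp
  obtain ⟨⟨gq, gqq, hgq⟩, fq, hfq⟩ := hdq
  obtain ⟨⟨gr, grr, hgr⟩, fr, hfr⟩ := hdr
  obtain ⟨fpp, hfp, hfpb⟩ := hfp.signs_of_mul hℓp
  obtain ⟨fqq, hfq, hfqb⟩ := hfq.signs_of_mul hℓq
  obtain ⟨frr, hfr, hfrb⟩ := hfr.signs_of_mul hℓr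
  have hqp := hpq.symm
  have hrp := hpr.symm
  have hrq := hqr.symm
  have hbp : b ≠ p := by rintro rfl; linarith
  have hbq : b ≠ q := by rintro rfl; linarith
  have hbr : b ≠ r := by rintro rfl; linarith
  set v : Fin 4 → E := ![p, q, r, b]
  have hsep : ∀ I : Set (Fin 4), 3 ∉ I → AffinelySeparates v I := by
    intro I h3
    -- `g·` is negative only at its own point, `f·` at its own point and at `b`
    by_cases h0 : 0 ∈ I <;> by_cases h1 : 1 ∈ I <;> by_cases h2 : 2 ∈ I <;>
      [use -ℓ; use -fr; use -fq; use gp; use -fp; use gq; use gr; use AffineMap.const ℝ E 1] <;>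
      intro i <;> fin_cases i <;> simp [v, *]
  have hind : AffineIndependent ℝ v := affineIndependent_of_forall_affinelySeparates fun I => by
    by_cases h3 : 3 ∈ I
    · simpa using (hsep Iᶜ (by simpa)).compl
    · exact hsep I h3
  have hcard := hind.card_le_finrank_succ
  have hspan := Submodule.finrank_le (vectorSpan ℝ (Set.range v))
  rw [Fintype.card_fin] at hcard
  omega

lemma ncard_isDoublyIsolated_pos_le_two [FiniteDimensional ℝ E] (hE : Module.finrank ℝ E ≤ 2)
    {A : Set E} (hA : A.Finite) {ℓ : E →ᵃ[ℝ] ℝ} (hb : ∃ b ∈ A, ℓ b < 0) :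
    {p ∈ A | 0 < ℓ p ∧ IsDoublyIsolated A ℓ p}.ncard ≤ 2 := by
  obtain ⟨b, hb, hℓb⟩ := hb
  by_contra! h
  obtain ⟨p, ⟨hp, hℓp, hdp⟩, q, ⟨hq, hℓq, hdq⟩, r, ⟨hr, hℓr, hdr⟩, hpq, hpr, hqr⟩ :=
    (two_lt_ncard (hA.subset (sep_subset _ _))).1 h
  exact false_of_three_isDoublyIsolated hE hp hq hr hb hpq hpr hqr hℓp hℓq hℓr hℓb hdp hdq hdr

end Separation

lemma exists_isolatesPoint_of_mem_extremePoints {E : Type*} [TopologicalSpace E]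
    [AddCommGroup E] [Module ℝ E] [IsTopologicalAddGroup E] [ContinuousSMul ℝ E]
    [LocallyConvexSpace ℝ E] [T2Space E] {s : Set E} (hs : s.Finite) {x : E}
    (hx : x ∈ (convexHull ℝ s).extremePoints ℝ) : ∃ f : E →ᵃ[ℝ] ℝ, IsolatesPoint f s x := by
  rw [(convex_convexHull ℝ s).mem_extremePoints_iff_mem_sdiff_convexHull_sdiff] at hx
  have hx' : x ∉ convexHull ℝ (s \ {x}) := fun h =>
    hx.2 (convexHull_mono (sdiff_subset_sdiff_left (subset_convexHull ℝ s)) h)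
  obtain ⟨f, u, hfx, hf⟩ := geometric_hahn_banach_point_closed (convex_convexHull ℝ _)
    (hs.sdiff.isClosed_convexHull ℝ) hx'
  refine ⟨f.toLinearMap.toAffineMap - AffineMap.const ℝ E u, by simpa using hfx,
    fun a ha hax => ?_⟩
  simpa using hf a (subset_convexHull ℝ _ ⟨ha, hax⟩)

section Projective

def dotLift (w : Fin 3 → ℝ) : E2 →ᵃ[ℝ] ℝ where
  toFun x := w ⬝ᵥ lift x
  linear := w 0 • (EuclideanSpace.proj 0 : E2 →L[ℝ] ℝ).toLinearMap +
    w 1 • (EuclideanSpace.proj 1 : E2 →L[ℝ] ℝ).toLinearMap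
  map_vadd' x v := by
    simp [lift, dotProduct, Fin.sum_univ_three]
    ring

lemma dotLift_apply (w : Fin 3 → ℝ) (x : E2) : dotLift w x = w ⬝ᵥ lift x := rfl

lemma exists_eq_dotLift (g : E2 →ᵃ[ℝ] ℝ) : ∃ w, g = dotLift w := by
  refine ⟨![g.linear (EuclideanSpace.single 0 1), g.linear (EuclideanSpace.single 1 1), g 0], ?_⟩
  ext x
  have hx : x = x 0 • EuclideanSpace.single 0 1 + x 1 • EuclideanSpace.single 1 1 := by
    ext i; fin_cases i <;> simp
  rw [congrFun g.decomp x, Pi.add_apply]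
  nth_rw 1 [hx]
  simp [dotLift_apply, lift, dotProduct, Fin.sum_univ_three]
  ring

lemma lift_injective : Function.Injective lift := by
  intro x y h
  ext i
  fin_cases i
  · exact congrFun h 0
  · exact congrFun h 1

def IsProjectiveTransform (M : Matrix (Fin 3) (Fin 3) ℝ) (t : E2 → E2) : Prop :=
  ∀ x : E2, M.mulVec (lift x) 2 ≠ 0 →
    (t x 0 = M.mulVec (lift x) 0 / M.mulVec (lift x) 2 ∧
     t x 1 = M.mulVec (lift x) 1 / M.mulVec (lift x) 2)

variable {M : Matrix (Fin 3) (Fin 3) ℝ} {t : E2 → E2}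

lemma IsProjectiveTransform.mulVec_lift (ht : IsProjectiveTransform M t) {x : E2}
    (hx : (M *ᵥ lift x) 2 ≠ 0) : M *ᵥ lift x = (M *ᵥ lift x) 2 • lift (t x) := by
  obtain ⟨h0, h1⟩ := ht x hx
  set v := M *ᵥ lift x
  ext i
  fin_cases i <;> simp [lift, h0, h1, mul_div_cancel₀ _ hx]

lemma IsProjectiveTransform.injOn (ht : IsProjectiveTransform M t) (hM : IsUnit M.det) :
    InjOn t {x | (M *ᵥ lift x) 2 ≠ 0} := by
  intro x hx y hy hxy
  have ex := ht.mulVec_lift hx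
  have ey := ht.mulVec_lift hy
  set Lx := (M *ᵥ lift x) 2
  set Ly := (M *ᵥ lift y) 2
  have key : M *ᵥ (Ly • lift x) = M *ᵥ (Lx • lift y) := by
    rw [Matrix.mulVec_smul, Matrix.mulVec_smul, ex, ey, hxy, smul_smul, smul_smul, mul_comm]
  have hsmul := Matrix.mulVec_injective_iff_isUnit.2 ((Matrix.isUnit_iff_isUnit_det M).2 hM) key
  have hscalar : Ly = Lx := by simpa [lift] using congrFun hsmul 2
  rw [hscalar] at hsmul
  exact lift_injective (smul_right_injective _ hx hsmul)

lemma IsProjectiveTransform.dotLift_vecMul_apply (ht : IsProjectiveTransform M t)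
    (w : Fin 3 → ℝ) {x : E2} (hx : (M *ᵥ lift x) 2 ≠ 0) :
    dotLift (w ᵥ* M) x = dotLift w (t x) * (M *ᵥ lift x) 2 := by
  have ex := ht.mulVec_lift hx
  set Lx := (M *ᵥ lift x) 2
  rw [dotLift_apply, dotLift_apply, ← Matrix.dotProduct_mulVec, ex, dotProduct_smul,
    smul_eq_mul, mul_comm]

lemma IsProjectiveTransform.isDoublyIsolated (ht : IsProjectiveTransform M t)
    (hM : IsUnit M.det) {A : Set E2} (hA : A.Finite) (hdisj : ∀ a ∈ A, (M *ᵥ lift a) 2 ≠ 0)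
    {p : E2} (hp : p ∈ (convexHull ℝ A).extremePoints ℝ)
    (htp : t p ∈ (convexHull ℝ (t '' A)).extremePoints ℝ) :
    IsDoublyIsolated A (dotLift (M 2)) p := by
  refine ⟨exists_isolatesPoint_of_mem_extremePoints hA hp, ?_⟩
  obtain ⟨g, hgp, hg⟩ := exists_isolatesPoint_of_mem_extremePoints (hA.image t) htp
  obtain ⟨w, rfl⟩ := exists_eq_dotLift g
  have hpA : p ∈ A := extremePoints_convexHull_subset hp
  have hmul : ∀ a ∈ A, dotLift (w ᵥ* M) a * dotLift (M 2) a =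
      dotLift w (t a) * ((M *ᵥ lift a) 2 * (M *ᵥ lift a) 2) := fun a ha => by
    rw [ht.dotLift_vecMul_apply w (hdisj a ha), mul_assoc]
    rfl
  refine ⟨dotLift (w ᵥ* M), ?_, fun a ha hap => ?_⟩
  · simp only [hmul p hpA]
    exact mul_neg_of_neg_of_pos hgp (mul_self_pos.2 (hdisj p hpA))
  · have htap : t a ≠ t p := fun h => hap (ht.injOn hM (hdisj a ha) (hdisj p hpA) h)
    simp only [hmul a ha]
    exact mul_pos (hg _ (mem_image_of_mem t ha) htap) (mul_self_pos.2 (hdisj a ha))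

end Projective

theorem stmt3_general (A : Finset E2)
    (M : Matrix (Fin 3) (Fin 3) ℝ) (hM : IsUnit M.det)
    (t : E2 → E2)
    -- `t` is the projective transform associated with `M`, defined wherever the third
    -- homogeneous coordinate of the image does not vanish:
    (ht : ∀ x : E2, M.mulVec (lift x) 2 ≠ 0 →
      (t x 0 = M.mulVec (lift x) 0 / M.mulVec (lift x) 2 ∧
       t x 1 = M.mulVec (lift x) 1 / M.mulVec (lift x) 2))
    -- the line sent to infinity is disjoint from `A`:
    (hdisj : ∀ a ∈ A, M.mulVec (lift a) 2 ≠ 0)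
    -- and splits `A` into two nonempty parts:
    (hsplit : (∃ a ∈ A, 0 < M.mulVec (lift a) 2) ∧ (∃ b ∈ A, M.mulVec (lift b) 2 < 0)) :
    {p : E2 | p ∈ A ∧ p ∈ Set.extremePoints ℝ (convexHull ℝ (A : Set E2)) ∧
        t p ∈ Set.extremePoints ℝ (convexHull ℝ (t '' (A : Set E2)))}.ncard ≤ 4 := by
  set L := dotLift (M 2)
  set D : (E2 →ᵃ[ℝ] ℝ) → Set E2 := fun ℓ => {p ∈ (A : Set E2) | 0 < ℓ p ∧ IsDoublyIsolated A ℓ p}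
  have hsub : {p : E2 | p ∈ A ∧ p ∈ Set.extremePoints ℝ (convexHull ℝ (A : Set E2)) ∧
      t p ∈ Set.extremePoints ℝ (convexHull ℝ (t '' (A : Set E2)))} ⊆ D L ∪ D (-L) := by
    rintro p ⟨hpA, hp, htp⟩
    have hd := IsProjectiveTransform.isDoublyIsolated ht hM A.finite_toSet hdisj hp htp
    rcases (hdisj p hpA).lt_or_gt with hLp | hLp
    · exact Or.inr ⟨hpA, neg_pos.2 hLp, hd.neg⟩
    · exact Or.inl ⟨hpA, hLp, hd⟩
  have hE : Module.finrank ℝ E2 ≤ 2 := by simp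
  obtain ⟨⟨a, ha, hLa⟩, ⟨b, hb, hLb⟩⟩ := hsplit
  calc _ ≤ (D L ∪ D (-L)).ncard :=
        ncard_le_ncard hsub (A.finite_toSet.subset (union_subset (sep_subset _ _) (sep_subset _ _)))
    _ ≤ (D L).ncard + (D (-L)).ncard := ncard_union_le _ _
    _ ≤ 2 + 2 := add_le_add (ncard_isDoublyIsolated_pos_le_two hE A.finite_toSet ⟨b, hb, hLb⟩)
        (ncard_isDoublyIsolated_pos_le_two hE A.finite_toSet ⟨a, ha, neg_neg_iff_pos.2 hLa⟩)

/-- Let `A` be a finite planar point set in general position and `t` a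
projective transform (induced by an invertible 3×3 matrix `M` on homogeneous coordinates)
whose line sent to infinity misses `A` and splits `A`. Then at most `4` points of `A` are
extreme in `A` and have extreme images in `t '' A`. -/
theorem stmt3 (A : Finset E2)
    (hgp : ∀ a ∈ A, ∀ b ∈ A, ∀ c ∈ A, a ≠ b → a ≠ c → b ≠ c →
      ¬ Collinear ℝ ({a, b, c} : Set E2))
    (M : Matrix (Fin 3) (Fin 3) ℝ) (hM : IsUnit M.det)
    (t : E2 → E2)
    -- `t` is the projective transform associated with `M`, defined wherever the third
    -- homogeneous coordinate of the image does not vanish: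
    (ht : ∀ x : E2, M.mulVec (lift x) 2 ≠ 0 →
      (t x 0 = M.mulVec (lift x) 0 / M.mulVec (lift x) 2 ∧
       t x 1 = M.mulVec (lift x) 1 / M.mulVec (lift x) 2))
    -- the line sent to infinity is disjoint from `A`:
    (hdisj : ∀ a ∈ A, M.mulVec (lift a) 2 ≠ 0)
    -- and splits `A` into two nonempty parts:
    (hsplit : (∃ a ∈ A, 0 < M.mulVec (lift a) 2) ∧ (∃ b ∈ A, M.mulVec (lift b) 2 < 0)) :
    {p : E2 | p ∈ A ∧ p ∈ Set.extremePoints ℝ (convexHull ℝ (A : Set E2)) ∧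
        t p ∈ Set.extremePoints ℝ (convexHull ℝ (t '' (A : Set E2)))}.ncard ≤ 4 :=
  stmt3_general A M hM t ht hdisj hsplit
end
end

section
/- Let G be a finite group all of whose nontrivial elements have exactly two 'poles' among a finite set 𝒫 on which G acts, such that counting pairs (g, B) with g ∈ G ∖ {id} and B a fixed point of g in 𝒫 yields: if G has N ≥ 2 elements and the action partitions 𝒫 into K orbits of sizes μ₁ ≤ … ≤ μ_K, then Σᵢ 1/γᵢ = K − 2 + 2/N where γᵢ = N/μᵢ ≥ 2 for all i. Under these constraints, either K = 2 and μ₁ = μ₂ = 1, or K = 3 and the orbit size multiset is one of [2, N/2, N/2], [4,4,6] (with N = 12), [6,8,12] (with N = 24), or [12,20,30] (with N = 60). -/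
/-!
Counting pairs `(g, x)` with `g • x = x` in two ways (Burnside) gives `|P| + 2 (N - 1) = K N`,
where `K` is the number of orbits. Every orbit has size `μ = N / γ ≤ N / 2` and there are at
most `|P|` orbits, which leaves only `K = 2` with `|P| = 2`, or `K = 3` with
`μ₁ + μ₂ + μ₃ = N + 2`. In the latter case, ordering `μ₁ ≤ μ₂ ≤ μ₃`, the largest orbit must have
`γ₃ = 2`, then `γ₂ ∈ {2, 3}`, and for `γ₂ = 3` only `γ₁ ∈ {3, 4, 5}` remain.
-/

open MulAction

/-- The orbit sizes of the dihedral, tetrahedral, octahedral and icosahedral groups of order `N`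
acting on their poles. -/
def IsPolyhedralOrbitSizes (N : ℕ) (s : Multiset ℕ) : Prop :=
  s = {2, N / 2, N / 2} ∨ (N = 12 ∧ s = {4, 4, 6}) ∨ (N = 24 ∧ s = {6, 8, 12}) ∨
    (N = 60 ∧ s = {12, 20, 30})

theorem eq_two_or_three_of_add_two_mul_eq_mul {K p N : ℕ} (hN : 2 ≤ N)
    (hcount : p + 2 * (N - 1) = K * N) (hp : 2 * p ≤ K * N) (hK : K ≤ p) :
    (K = 2 ∧ p = 2) ∨ (K = 3 ∧ p = N + 2) := by
  have hK4 : K < 4 := by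
    by_contra! h
    have : 4 * N ≤ K * N := Nat.mul_le_mul_right N h
    omega
  interval_cases K <;> omega

theorem isPolyhedralOrbitSizes_of_le {N a b c : ℕ} (hab : a ≤ b) (hbc : b ≤ c)
    (ha : ∃ γ, 2 ≤ γ ∧ a * γ = N) (hb : ∃ γ, 2 ≤ γ ∧ b * γ = N) (hc : ∃ γ, 2 ≤ γ ∧ c * γ = N)
    (hsum : a + b + c = N + 2) : IsPolyhedralOrbitSizes N {a, b, c} := by
  obtain ⟨p, hp, haN⟩ := ha
  obtain ⟨q, hq, hbN⟩ := hb
  obtain ⟨r, hr, hcN⟩ := hc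
  have hr2 : r = 2 := by nlinarith
  subst hr2
  have hq3 : q ≤ 3 := by nlinarith
  interval_cases q
  · obtain ⟨rfl, rfl⟩ : a = 2 ∧ b = c := by omega
    left
    rw [← hcN, Nat.mul_div_cancel b two_pos]
  · have hp5 : p ≤ 5 := by nlinarith
    interval_cases p
    · omega
    · obtain ⟨rfl, rfl, rfl, rfl⟩ : N = 12 ∧ a = 4 ∧ b = 4 ∧ c = 6 := by omega
      exact .inr (.inl ⟨rfl, rfl⟩)
    · obtain ⟨rfl, rfl, rfl, rfl⟩ : N = 24 ∧ a = 6 ∧ b = 8 ∧ c = 12 := by omega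
      exact .inr (.inr (.inl ⟨rfl, rfl⟩))
    · obtain ⟨rfl, rfl, rfl, rfl⟩ : N = 60 ∧ a = 12 ∧ b = 20 ∧ c = 30 := by omega
      exact .inr (.inr (.inr ⟨rfl, rfl⟩))

theorem isPolyhedralOrbitSizes_of_add_add_eq {N a b c : ℕ}
    (ha : ∃ γ, 2 ≤ γ ∧ a * γ = N) (hb : ∃ γ, 2 ≤ γ ∧ b * γ = N) (hc : ∃ γ, 2 ≤ γ ∧ c * γ = N)
    (hsum : a + b + c = N + 2) : IsPolyhedralOrbitSizes N {a, b, c} := by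
  wlog hab : a ≤ b generalizing a b
  · have := this hb ha (by omega) (by omega)
    rwa [show ({b, a, c} : Multiset ℕ) = {a, b, c} by
      simp only [Multiset.insert_eq_cons, ← Multiset.singleton_add]; abel] at this
  wlog hac : a ≤ c generalizing a c
  · have := this ha hc (by omega) (by omega) (by omega)
    rwa [show ({c, b, a} : Multiset ℕ) = {a, b, c} by
      simp only [Multiset.insert_eq_cons, ← Multiset.singleton_add]; abel] at this
  wlog hbc : b ≤ c generalizing b c
  · have := this hc hb (by omega) hac hab (by omega)
    rwa [show ({a, c, b} : Multiset ℕ) = {a, b, c} by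
      simp only [Multiset.insert_eq_cons, ← Multiset.singleton_add]; abel] at this
  exact isPolyhedralOrbitSizes_of_le hab hbc ha hb hc hsum

section

variable {G P : Type*} [Group G] [MulAction G P]

theorem card_eq_sum_card_orbit [Fintype (orbitRel.Quotient G P)] [Finite P] :
    Nat.card P = ∑ o : orbitRel.Quotient G P, Nat.card o.orbit := by
  rw [Nat.card_congr (selfEquivSigmaOrbits' G P), Nat.card_sigma]

theorem card_orbits_le_card [Finite P] : Nat.card (orbitRel.Quotient G P) ≤ Nat.card P :=
  Nat.card_le_card_of_surjective _ Quotient.mk''_surjective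

theorem card_orbit_eq_one_of_card_orbits_eq_card [Finite P]
    (h : Nat.card (orbitRel.Quotient G P) = Nat.card P) (o : orbitRel.Quotient G P) :
    Nat.card o.orbit = 1 := by
  have hinj : Function.Injective (Quotient.mk'' : P → orbitRel.Quotient G P) :=
    (Quotient.mk''_surjective.bijective_of_nat_card_le h.ge).injective
  rw [Nat.card_eq_one_iff_unique]
  refine ⟨⟨fun x y => Subtype.ext (hinj ?_)⟩, o.nonempty_orbit.to_subtype⟩
  rw [orbitRel.Quotient.mem_orbit.1 x.2, orbitRel.Quotient.mem_orbit.1 y.2]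

theorem card_add_two_mul_card_sub_one_eq_card_orbits_mul_card_group [Fintype G] [Finite P]
    (hfix : ∀ g : G, g ≠ 1 → Nat.card (fixedBy P g) = 2) :
    Nat.card P + 2 * (Nat.card G - 1) = Nat.card (orbitRel.Quotient G P) * Nat.card G := by
  classical
  have := Fintype.ofFinite P
  have hburnside := sum_card_fixedBy_eq_card_orbits_mul_card_group G P
  simp only [← Nat.card_eq_fintype_card] at hburnside
  rw [← hburnside, Fintype.sum_eq_add_sum_compl 1, fixedBy_one_eq_univ, Nat.card_univ,
    Finset.sum_const_nat fun g hg => hfix g (by simpa using hg), Finset.card_compl,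
    Finset.card_singleton, ← Nat.card_eq_fintype_card, mul_comm]

theorem exists_card_orbit_mul_eq_card_group [Finite G]
    (hcov : ∀ x : P, ∃ g : G, g ≠ 1 ∧ g • x = x) (o : orbitRel.Quotient G P) :
    ∃ γ, 2 ≤ γ ∧ Nat.card o.orbit * γ = Nat.card G := by
  obtain ⟨g, hg, hgx⟩ := hcov o.out
  refine ⟨Nat.card (stabilizer G o.out), ?_, ?_⟩
  · have : Nontrivial (stabilizer G o.out) := ⟨⟨⟨g, hgx⟩, 1, by simpa [Subtype.ext_iff]⟩⟩
    exact Finite.one_lt_card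
  · rw [orbitRel.Quotient.orbit_eq_orbit_out o Quotient.out_eq', Nat.card_coe_set_eq,
      ← index_stabilizer, mul_comm, Subgroup.card_mul_index]

theorem two_mul_card_le_card_orbits_mul_card_group [Finite G] [Finite P]
    (hcov : ∀ x : P, ∃ g : G, g ≠ 1 ∧ g • x = x) :
    2 * Nat.card P ≤ Nat.card (orbitRel.Quotient G P) * Nat.card G := by
  have := Fintype.ofFinite (orbitRel.Quotient G P)
  rw [card_eq_sum_card_orbit (G := G), Finset.mul_sum,
    Nat.card_eq_fintype_card (α := orbitRel.Quotient G P), ← Finset.card_univ, ← smul_eq_mul]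
  refine Finset.sum_le_card_nsmul _ _ _ fun o _ => ?_
  obtain ⟨γ, hγ, hμγ⟩ := exists_card_orbit_mul_eq_card_group hcov o
  nlinarith

end

/-- Let `G` be a finite group of order `N ≥ 2` acting on a finite set `𝒫`
of "poles" so that every nontrivial element of `G` fixes exactly two poles and every pole
is fixed by some nontrivial element. Then either the action has two orbits, both of size
one, or it has three orbits whose size multiset is `{2, N/2, N/2}`, `{4,4,6}` (with
`N = 12`), `{6,8,12}` (with `N = 24`), or `{12,20,30}` (with `N = 60`). -/
theorem stmt12 (G : Type*) [Group G] [Fintype G] (P : Type*) [Fintype P] [MulAction G P]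
    (N : ℕ) (hN : N = Fintype.card G) (hN2 : 2 ≤ N)
    (hfix : ∀ g : G, g ≠ 1 → Nat.card {x : P // g • x = x} = 2)
    (hcov : ∀ x : P, ∃ g : G, g ≠ 1 ∧ g • x = x) :
    (Nat.card (MulAction.orbitRel.Quotient G P) = 2 ∧
      ∀ o : MulAction.orbitRel.Quotient G P, Nat.card o.orbit = 1) ∨
    (Nat.card (MulAction.orbitRel.Quotient G P) = 3 ∧
      ∃ o₁ o₂ o₃ : MulAction.orbitRel.Quotient G P, o₁ ≠ o₂ ∧ o₁ ≠ o₃ ∧ o₂ ≠ o₃ ∧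
        (({Nat.card o₁.orbit, Nat.card o₂.orbit, Nat.card o₃.orbit} : Multiset ℕ)
            = {2, N / 2, N / 2} ∨
         (N = 12 ∧ ({Nat.card o₁.orbit, Nat.card o₂.orbit, Nat.card o₃.orbit} : Multiset ℕ)
            = {4, 4, 6}) ∨
         (N = 24 ∧ ({Nat.card o₁.orbit, Nat.card o₂.orbit, Nat.card o₃.orbit} : Multiset ℕ)
            = {6, 8, 12}) ∨
         (N = 60 ∧ ({Nat.card o₁.orbit, Nat.card o₂.orbit, Nat.card o₃.orbit} : Multiset ℕ)
            = {12, 20, 30}))) := by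
  classical
  have hNG : Nat.card G = N := by rw [hN, Nat.card_eq_fintype_card]
  rcases eq_two_or_three_of_add_two_mul_eq_mul hN2
      (hNG ▸ card_add_two_mul_card_sub_one_eq_card_orbits_mul_card_group hfix)
      (hNG ▸ two_mul_card_le_card_orbits_mul_card_group hcov) card_orbits_le_card
    with ⟨hK, hP⟩ | ⟨hK, hP⟩
  · exact .inl ⟨hK, card_orbit_eq_one_of_card_orbits_eq_card (hK.trans hP.symm)⟩
  · have hK' : (Finset.univ : Finset (orbitRel.Quotient G P)).card = 3 := by
      rwa [Finset.card_univ, ← Nat.card_eq_fintype_card]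
    obtain ⟨o₁, o₂, o₃, h₁₂, h₁₃, h₂₃, huniv⟩ := Finset.card_eq_three.1 hK'
    have hsum : Nat.card o₁.orbit + Nat.card o₂.orbit + Nat.card o₃.orbit = N + 2 := by
      rw [← hP, card_eq_sum_card_orbit (G := G) (P := P), huniv,
        Finset.sum_insert (by simp [h₁₂, h₁₃]), Finset.sum_pair h₂₃, add_assoc]
    have hsizes (o : orbitRel.Quotient G P) : ∃ γ, 2 ≤ γ ∧ Nat.card o.orbit * γ = N :=
      hNG ▸ exists_card_orbit_mul_eq_card_group hcov o
    exact .inr ⟨hK, o₁, o₂, o₃, h₁₂, h₁₃, h₂₃,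
      isPolyhedralOrbitSizes_of_add_add_eq (hsizes o₁) (hsizes o₂) (hsizes o₃) hsum⟩
end

section
/- Let G be a group of symmetries (orientation preserving permutations) of a projective point set P such that every nontrivial element of G has exactly two poles which are antipodal, and suppose the stabilizer of every hemiset is cyclic. Then any two distinct maximal cyclic subgroups C, C' of G intersect trivially: C ∩ C' = {id}. -/
/-- Let `G` be a group of symmetries of a projective point set acting on
its hemisets `X` (with antipodal involution `neg`), such that every nontrivial element of
`G` has exactly two poles, which are antipodal, the stabilizer of every hemiset is trivial
or a maximal cyclic subgroup, and every maximal cyclic subgroup is the stabilizer of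
exactly two antipodal hemisets. Then any two distinct maximal cyclic subgroups of `G`
intersect trivially. -/
theorem stmt19 {G : Type*} [Group G] {X : Type*} [MulAction G X]
    (neg : X → X) (hinv : ∀ B : X, neg (neg B) = B)
    (hpoles : ∀ g : G, g ≠ 1 → ∃ B : X, B ≠ neg B ∧ {x : X | g • x = x} = {B, neg B})
    (hstab : ∀ B : X, MulAction.stabilizer G B = ⊥ ∨
      (IsCyclic (MulAction.stabilizer G B) ∧
        ∀ D : Subgroup G, IsCyclic D → MulAction.stabilizer G B ≤ D →
          MulAction.stabilizer G B = D))
    (hmcs : ∀ C : Subgroup G, IsCyclic C → (∀ D : Subgroup G, IsCyclic D → C ≤ D → C = D) →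
      ∃ B : X, C = MulAction.stabilizer G B ∧ C = MulAction.stabilizer G (neg B) ∧
        ∀ B' : X, C = MulAction.stabilizer G B' → B' = B ∨ B' = neg B)
    (C C' : Subgroup G)
    (hC : IsCyclic C ∧ ∀ D : Subgroup G, IsCyclic D → C ≤ D → C = D)
    (hC' : IsCyclic C' ∧ ∀ D : Subgroup G, IsCyclic D → C' ≤ D → C' = D)
    (hne : C ≠ C') :
    C ⊓ C' = ⊥ := by
  obtain ⟨B, hB1, hB2, _⟩ := hmcs C hC.1 hC.2
  obtain ⟨B', hB'1, _, _⟩ := hmcs C' hC'.1 hC'.2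
  ext g
  simp only [Subgroup.mem_inf, Subgroup.mem_bot]
  constructor
  · rintro ⟨hgC, hgC'⟩
    by_contra hg1
    obtain ⟨B₀, _, hfix⟩ := hpoles g hg1
    have hBfix : B ∈ {x : X | g • x = x} := by
      have : g ∈ MulAction.stabilizer G B := hB1 ▸ hgC
      exact this
    have hB'fix : B' ∈ {x : X | g • x = x} := by
      have : g ∈ MulAction.stabilizer G B' := hB'1 ▸ hgC'
      exact this
    rw [hfix] at hBfix hB'fix
    simp only [Set.mem_insert_iff, Set.mem_singleton_iff] at hBfix hB'fix
    have key : B' = B ∨ B' = neg B := by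
      rcases hBfix with h | h <;> rcases hB'fix with h' | h' <;> subst h <;> subst h'
      · exact Or.inl rfl
      · exact Or.inr rfl
      · exact Or.inr (hinv _).symm
      · exact Or.inl rfl
    rcases key with h | h
    · exact hne ((hB1.trans (by rw [h])).trans hB'1.symm)
    · exact hne ((hB2.trans (by rw [h])).trans hB'1.symm)
  · rintro rfl
    exact ⟨C.one_mem, C'.one_mem⟩
end
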